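/- arXiv:2301.01242 — 2 statements merged into one kernel-verified Lean document; each statement's English description precedes it below -/
import Mathlib

section
/- Let a : ℤ^d → ℝ with a(z) ≥ 0, a(0)=0, Σ_z a(z) = 1, and let μ : ℤ^d → ℝ be a positive weight satisfying sup_x μ(x+z)/μ(x) ≤ μ(0)/μ(z) for all z. Define the convolution operator (Āf)(x) = Σ_z a(z) f(x−z) on the weighted space l²(ℤ^d, μ). Then the operator norm of Ā satisfies ‖Ā‖_μ ≤ Σ_{z≠0} a(z) √(μ(0)/μ(z)). -/
/-!
Put `w z = √(μ 0 / μ z)`. The regularity of `μ` says that translation by `z` multiplies the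
`l²(μ)`-norm by at most `w z`. Writing `a z = √(a z w z) · √(a z / w z)`, Cauchy–Schwarz gives
`(Āf x)² ≤ (∑ a w) · ∑_z (a z / w z) f (x - z)²`; summing against `μ` and exchanging the order of
summation, each translate contributes `(a z / w z) · w z² ‖f‖² = a z w z ‖f‖²`.
-/

open Filter

theorem tsum_sq_le_tsum_mul_tsum_of_sq_le_mul {ι : Type*} {r f g : ι → ℝ}
    (hf : ∀ i, 0 ≤ f i) (hg : ∀ i, 0 ≤ g i) (hf_sum : Summable f) (hg_sum : Summable g)
    (hrfg : ∀ i, r i ^ 2 ≤ f i * g i) :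
    (∑' i, r i) ^ 2 ≤ (∑' i, f i) * ∑' i, g i := by
  have hr_le : ∀ i, ‖r i‖ ≤ (f i + g i) / 2 := fun i => by
    rw [Real.norm_eq_abs, le_div_iff₀ two_pos, ← abs_two, ← abs_mul, abs_le]
    constructor <;> nlinarith [sq_nonneg (f i - g i), hrfg i, hf i, hg i]
  have hr_sum : Summable r := .of_norm_bounded ((hf_sum.add hg_sum).div_const 2) hr_le
  refine le_of_tendsto (hr_sum.hasSum.pow 2) (Eventually.of_forall fun s => ?_)
  calc (∑ i ∈ s, r i) ^ 2 ≤ (∑ i ∈ s, f i) * ∑ i ∈ s, g i :=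
        Finset.sum_sq_le_sum_mul_sum_of_sq_le_mul s (fun i _ => hf i) (fun i _ => hg i)
          fun i _ => hrfg i
    _ ≤ (∑' i, f i) * ∑' i, g i :=
        mul_le_mul (hf_sum.sum_le_tsum s fun i _ => hf i) (hg_sum.sum_le_tsum s fun i _ => hg i)
          (Finset.sum_nonneg fun i _ => hg i) (tsum_nonneg hf)

theorem sq_tsum_mul_le_tsum_mul_mul_tsum_div_mul_sq {ι : Type*} {a w b : ι → ℝ}
    (ha : ∀ i, 0 ≤ a i) (hw : ∀ i, 0 < w i) (haw : Summable fun i => a i * w i)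
    (hab : Summable fun i => a i / w i * b i ^ 2) :
    (∑' i, a i * b i) ^ 2 ≤ (∑' i, a i * w i) * ∑' i, a i / w i * b i ^ 2 :=
  tsum_sq_le_tsum_mul_tsum_of_sq_le_mul (fun i => mul_nonneg (ha i) (hw i).le)
    (fun i => mul_nonneg (div_nonneg (ha i) (hw i).le) (sq_nonneg _)) haw hab
    fun i => le_of_eq (by field_simp [(hw i).ne'])

theorem tsum_sq_tsum_mul_le_of_tsum_sq_le {X Z : Type*} (a w : Z → ℝ) (μ : X → ℝ)
    (g : X → Z → ℝ) (N : ℝ) (ha : ∀ z, 0 ≤ a z) (hw : ∀ z, 0 < w z) (hμ : ∀ x, 0 < μ x)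
    (haw : Summable fun z => a z * w z) (hg : ∀ z, Summable fun x => g x z ^ 2 * μ x)
    (hgN : ∀ z, ∑' x, g x z ^ 2 * μ x ≤ w z ^ 2 * N) :
    ∑' x, (∑' z, a z * g x z) ^ 2 * μ x ≤ (∑' z, a z * w z) ^ 2 * N := by
  set S := ∑' z, a z * w z
  set F : Z × X → ℝ := fun p => a p.1 / w p.1 * (g p.2 p.1 ^ 2 * μ p.2)
  have hF_nonneg : 0 ≤ F := fun p =>
    mul_nonneg (div_nonneg (ha _) (hw _).le) (mul_nonneg (sq_nonneg _) (hμ _).le)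
  have hF_row : ∀ z, ∑' x, F (z, x) ≤ a z * w z * N := fun z =>
    calc ∑' x, F (z, x) = a z / w z * ∑' x, g x z ^ 2 * μ x := by simp only [F, tsum_mul_left]
      _ ≤ a z / w z * (w z ^ 2 * N) :=
          mul_le_mul_of_nonneg_left (hgN z) (div_nonneg (ha z) (hw z).le)
      _ = a z * w z * N := by field_simp [(hw z).ne']
  have hF_rows : Summable fun z => ∑' x, F (z, x) :=
    .of_nonneg_of_le (fun z => tsum_nonneg fun x => hF_nonneg _) hF_row (haw.mul_right N)
  have hF : Summable F :=
    (summable_prod_of_nonneg hF_nonneg).2 ⟨fun z => (hg z).mul_left (a z / w z), hF_rows⟩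
  have hF_col : ∀ x, ∑' z, F (z, x) = (∑' z, a z / w z * g x z ^ 2) * μ x := fun x => by
    rw [← tsum_mul_right]
    exact tsum_congr fun z => by ring
  have hpointwise : ∀ x, (∑' z, a z * g x z) ^ 2 * μ x ≤ S * ∑' z, F (z, x) := fun x => by
    have hcol : Summable fun z => a z / w z * g x z ^ 2 :=
      ((hF.prod_symm.prod_factor x).mul_right (μ x)⁻¹).congr fun z => by
        dsimp only [F, Prod.swap]
        field_simp [(hμ x).ne']
    rw [hF_col, ← mul_assoc]
    exact mul_le_mul_of_nonneg_right
      (sq_tsum_mul_le_tsum_mul_mul_tsum_div_mul_sq ha hw haw hcol) (hμ x).le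
  have hS : 0 ≤ S := tsum_nonneg fun z => mul_nonneg (ha z) (hw z).le
  have hF_cols : Summable fun x => ∑' z, F (z, x) := hF.prod_symm.prod
  calc ∑' x, (∑' z, a z * g x z) ^ 2 * μ x ≤ ∑' x, S * ∑' z, F (z, x) :=
        Summable.tsum_le_tsum hpointwise
          (.of_nonneg_of_le (fun x => mul_nonneg (sq_nonneg _) (hμ x).le) hpointwise
            (hF_cols.mul_left S))
          (hF_cols.mul_left S)
    _ = S * ∑' z, ∑' x, F (z, x) := by rw [tsum_mul_left, hF.tsum_comm]
    _ ≤ S * ∑' z, a z * w z * N :=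
        mul_le_mul_of_nonneg_left (hF_rows.tsum_le_tsum hF_row (haw.mul_right N)) hS
    _ = S ^ 2 * N := by rw [tsum_mul_right]; ring

section Translation

variable {G : Type*} [AddGroup G] {h μ : G → ℝ} {z : G} {C : ℝ}

theorem summable_mul_comp_add_right (hh : ∀ y, 0 ≤ h y) (hμ : ∀ y, 0 ≤ μ y)
    (hC : ∀ y, μ (y + z) ≤ C * μ y) (hs : Summable fun y => h y * μ y) :
    Summable fun y => h y * μ (y + z) :=
  .of_nonneg_of_le (fun y => mul_nonneg (hh y) (hμ _))
    (fun y => (mul_le_mul_of_nonneg_left (hC y) (hh y)).trans_eq (by ring)) (hs.mul_left C)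

theorem summable_comp_sub_mul (hh : ∀ y, 0 ≤ h y) (hμ : ∀ y, 0 ≤ μ y)
    (hC : ∀ y, μ (y + z) ≤ C * μ y) (hs : Summable fun y => h y * μ y) :
    Summable fun x => h (x - z) * μ x := by
  rw [← (Equiv.addRight z).summable_iff]
  simpa [Function.comp_def] using summable_mul_comp_add_right hh hμ hC hs

theorem tsum_comp_sub_mul_le (hh : ∀ y, 0 ≤ h y) (hμ : ∀ y, 0 ≤ μ y)
    (hC : ∀ y, μ (y + z) ≤ C * μ y) (hs : Summable fun y => h y * μ y) :
    ∑' x, h (x - z) * μ x ≤ C * ∑' y, h y * μ y := by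
  rw [← (Equiv.addRight z).tsum_eq, ← tsum_mul_left]
  simp only [Equiv.coe_addRight, add_sub_cancel_right]
  exact Summable.tsum_le_tsum (fun y => (mul_le_mul_of_nonneg_left (hC y) (hh y)).trans_eq
    (by ring)) (summable_mul_comp_add_right hh hμ hC hs) (hs.mul_left C)

end Translation

theorem stmt2_general {d : ℕ} (a : (Fin d → ℤ) → ℝ) (μ : (Fin d → ℤ) → ℝ)
    (ha_nonneg : ∀ z, 0 ≤ a z)
    (hμ_pos : ∀ x, 0 < μ x)
    (hμ_reg : ∀ z x : Fin d → ℤ, μ (x + z) / μ x ≤ μ 0 / μ z)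
    (hS : Summable fun z => a z * Real.sqrt (μ 0 / μ z))
    (f : (Fin d → ℤ) → ℝ) (hf : Summable fun x => f x ^ 2 * μ x) :
    (∑' x, (∑' z, a z * f (x - z)) ^ 2 * μ x) ≤
      (∑' z, a z * Real.sqrt (μ 0 / μ z)) ^ 2 * ∑' x, f x ^ 2 * μ x := by
  have hw_pos : ∀ z, 0 < Real.sqrt (μ 0 / μ z) := fun z =>
    Real.sqrt_pos.2 (div_pos (hμ_pos 0) (hμ_pos z))
  have hw_sq : ∀ z, Real.sqrt (μ 0 / μ z) ^ 2 = μ 0 / μ z := fun z =>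
    Real.sq_sqrt (div_pos (hμ_pos 0) (hμ_pos z)).le
  have hμ_nonneg : ∀ x, 0 ≤ μ x := fun x => (hμ_pos x).le
  have htranslate : ∀ z y, μ (y + z) ≤ μ 0 / μ z * μ y := fun z y =>
    (div_le_iff₀ (hμ_pos y)).1 (hμ_reg z y)
  have hshift_summable : ∀ z, Summable fun x => f (x - z) ^ 2 * μ x := fun z =>
    summable_comp_sub_mul (h := fun y => f y ^ 2) (fun y => sq_nonneg _) hμ_nonneg
      (htranslate z) hf
  have hshift_le : ∀ z, ∑' x, f (x - z) ^ 2 * μ x ≤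
      Real.sqrt (μ 0 / μ z) ^ 2 * ∑' x, f x ^ 2 * μ x := fun z => by
    rw [hw_sq]
    exact tsum_comp_sub_mul_le (h := fun y => f y ^ 2) (fun y => sq_nonneg _) hμ_nonneg
      (htranslate z) hf
  exact tsum_sq_tsum_mul_le_of_tsum_sq_le a (fun z => Real.sqrt (μ 0 / μ z)) μ
    (fun x z => f (x - z)) (∑' x, f x ^ 2 * μ x) ha_nonneg hw_pos hμ_pos hS hshift_summable
    hshift_le

/-- norm bound `‖Ā‖_μ ≤ Σ_{z≠0} a(z) √(μ(0)/μ(z))` for the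
convolution operator `(Āf)(x) = Σ_z a(z) f(x−z)` on `l²(ℤ^d, μ)`, stated as the
squared inequality `‖Āf‖²_μ ≤ (Σ_z a(z)√(μ(0)/μ(z)))² ‖f‖²_μ`. -/
theorem stmt2 {d : ℕ} (a : (Fin d → ℤ) → ℝ) (μ : (Fin d → ℤ) → ℝ)
    (ha_nonneg : ∀ z, 0 ≤ a z) (ha0 : a 0 = 0) (ha_sum : HasSum a 1)
    (hμ_pos : ∀ x, 0 < μ x) (hμ_sum : Summable μ)
    (hμ_reg : ∀ z x : Fin d → ℤ, μ (x + z) / μ x ≤ μ 0 / μ z)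
    (hS : Summable fun z => a z * Real.sqrt (μ 0 / μ z))
    (f : (Fin d → ℤ) → ℝ) (hf : Summable fun x => f x ^ 2 * μ x)
    (hAf : Summable fun x => (∑' z, a z * f (x - z)) ^ 2 * μ x) :
    (∑' x, (∑' z, a z * f (x - z)) ^ 2 * μ x) ≤
      (∑' z, a z * Real.sqrt (μ 0 / μ z)) ^ 2 * ∑' x, f x ^ 2 * μ x :=
  stmt2_general a μ ha_nonneg hμ_pos hμ_reg hS f hf
end

section
/- Let H₂ψ(x) = 2κ Δψ(x) + B(x)ψ(x) on l²(ℤ), where Δψ(x) = ψ(x+1) + ψ(x−1) − 2ψ(x), κ > 0, and B ∈ l¹(ℤ) with δ = Σ_{x∈ℤ} B(x) > 0. Then sup of the quadratic form (H₂ψ, ψ)/(ψ,ψ) over nonzero ψ ∈ l²(ℤ) is strictly positive; equivalently, H₂ has a positive eigenvalue λ₀(H₂) > 0 for every κ > 0. -/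
/-!
Write `E(v) = Σ B v² - 2κ Σ (v(x+1) - v(x))²` for the quadratic form of `H₂` after summation by
parts. On the unit ball of `ℓ²(ℤ)`, which is compact for pointwise convergence, `E` is upper
semicontinuous (the potential part is continuous by dominated convergence since `B ∈ ℓ¹`, and
the kinetic part, a sum of nonnegative continuous terms, is lower semicontinuous), so it attains
its maximum `m` at some `ψ`. Trapezoids equal to `1` on `[-n, n]` and of slope `1/n` have kinetic
energy `O(1/n)` and potential energy tending to `δ > 0`, so `m > 0`; by homogeneity `ψ` then lies
on the unit sphere and maximizes the Rayleigh quotient. Perturbing `ψ` at a single site gives the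
Euler–Lagrange equation `H₂ψ = mψ`.
-/

open Filter Topology

theorem Summable.hasSum_add_sum_sub {ι : Type*} {f g : ι → ℝ} (hf : Summable f) {s : Finset ι}
    (hs : ∀ x ∉ s, g x = f x) : HasSum g (∑' x, f x + ∑ x ∈ s, (g x - f x)) := by
  convert hf.hasSum.add (hasSum_sum_of_ne_finset_zero (f := fun x => g x - f x)
    fun x hx => by rw [hs x hx, sub_self]) using 1
  funext x
  ring

theorem summable_mul_sq {ι : Type*} {B v : ι → ℝ} (hB : Summable fun x => |B x|)
    (hv : Summable fun x => v x ^ 2) : Summable fun x => B x * v x ^ 2 :=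
  (hB.mul_right (∑' x, v x ^ 2)).of_norm_bounded fun x => by
    rw [Real.norm_eq_abs, abs_mul, abs_sq]
    exact mul_le_mul_of_nonneg_left (hv.le_tsum x fun y _ => sq_nonneg (v y)) (abs_nonneg _)

theorem lowerSemicontinuousOn_tsum_of_nonneg {ι α : Type*} [TopologicalSpace α]
    {f : ι → α → ℝ} {s : Set α} (hf : ∀ i, Continuous (f i)) (hf0 : ∀ i a, 0 ≤ f i a)
    (hs : ∀ a ∈ s, Summable fun i => f i a) :
    LowerSemicontinuousOn (fun a => ∑' i, f i a) s := by
  intro a ha y hy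
  obtain ⟨F, hF⟩ := ((hs a ha).hasSum.eventually (lt_mem_nhds hy)).exists
  have hcont : Continuous fun a => ∑ i ∈ F, f i a := continuous_finsetSum _ fun i _ => hf i
  filter_upwards [self_mem_nhdsWithin,
    nhdsWithin_le_nhds (hcont.continuousAt.eventually (lt_mem_nhds hF))] with b hb hyb
  exact hyb.trans_le ((hs b hb).sum_le_tsum F fun i _ => hf0 i b)

theorem eq_zero_of_forall_mul_add_mul_sq_nonpos {a c : ℝ} (h : ∀ t, a * t + c * t ^ 2 ≤ 0) :
    a = 0 := by
  have hmax : IsLocalMax (fun t => a * t + c * t ^ 2) 0 :=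
    Eventually.of_forall fun t => by simpa using h t
  have hderiv : HasDerivAt (fun t => a * t + c * t ^ 2) a 0 := by
    simpa using ((hasDerivAt_id' (0 : ℝ)).const_mul a).fun_add
      (((hasDerivAt_id' (0 : ℝ)).fun_pow 2).const_mul c)
  exact hmax.hasDerivAt_eq_zero hderiv

namespace DiscreteSchrodinger

noncomputable section

def discreteLaplacian (ψ : ℤ → ℝ) (x : ℤ) : ℝ := ψ (x + 1) + ψ (x - 1) - 2 * ψ x

def dirichletEnergy (v : ℤ → ℝ) : ℝ := ∑' x, (v (x + 1) - v x) ^ 2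

def energy (κ : ℝ) (B v : ℤ → ℝ) : ℝ := ∑' x, B x * v x ^ 2 - 2 * κ * dirichletEnergy v

def unitBall : Set (ℤ → ℝ) := {v | Summable (fun x => v x ^ 2) ∧ ∑' x, v x ^ 2 ≤ 1}

variable {κ : ℝ} {B : ℤ → ℝ}

theorem summable_sq_succ_sub {v : ℤ → ℝ} (hv : Summable fun x => v x ^ 2) :
    Summable fun x => (v (x + 1) - v x) ^ 2 := by
  have hshift : Summable fun x => v (x + 1) ^ 2 := (Equiv.addRight (1 : ℤ)).summable_iff.2 hv
  refine .of_nonneg_of_le (fun x => sq_nonneg _) (fun x => ?_) ((hshift.add hv).mul_left 2)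
  nlinarith [sq_nonneg (v (x + 1) + v x)]

theorem mem_unitBall_iff {v : ℤ → ℝ} :
    v ∈ unitBall ↔ ∀ s : Finset ℤ, ∑ x ∈ s, v x ^ 2 ≤ 1 :=
  ⟨fun hv s => (hv.1.sum_le_tsum s fun _ _ => sq_nonneg _).trans hv.2, fun h =>
    ⟨summable_of_sum_le (fun _ => sq_nonneg _) h, Real.tsum_le_of_sum_le (fun _ => sq_nonneg _) h⟩⟩

theorem sq_le_one_of_mem_unitBall {v : ℤ → ℝ} (hv : v ∈ unitBall) (x : ℤ) : v x ^ 2 ≤ 1 :=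
  (hv.1.le_tsum x fun y _ => sq_nonneg (v y)).trans hv.2

theorem zero_mem_unitBall : (0 : ℤ → ℝ) ∈ unitBall := by
  simp [unitBall]

theorem isCompact_unitBall : IsCompact unitBall := by
  have hclosed : IsClosed unitBall := by
    have : unitBall = ⋂ s : Finset ℤ, {v | ∑ x ∈ s, v x ^ 2 ≤ 1} := by
      ext v
      simp [mem_unitBall_iff]
    rw [this]
    exact isClosed_iInter fun s => isClosed_le (by fun_prop) continuous_const
  refine (isCompact_univ_pi fun _ : ℤ => isCompact_Icc (a := (-1 : ℝ)) (b := 1)).of_isClosed_subset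
    hclosed fun v hv x _ => abs_le.1 ?_
  exact sq_le_one_iff_abs_le_one _ |>.1 (sq_le_one_of_mem_unitBall hv x)

theorem continuousOn_tsum_mul_sq (hB : Summable fun x => |B x|) :
    ContinuousOn (fun v : ℤ → ℝ => ∑' x, B x * v x ^ 2) unitBall := by
  intro v _
  refine tendsto_tsum_of_dominated_convergence hB (fun x => ?_)
    (eventually_nhdsWithin_of_forall fun w hw x => ?_)
  · exact ((((continuous_apply x).tendsto v).mono_left nhdsWithin_le_nhds).pow 2).const_mul (B x)
  · rw [Real.norm_eq_abs, abs_mul, abs_sq]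
    exact mul_le_of_le_one_right (abs_nonneg _) (sq_le_one_of_mem_unitBall hw x)

theorem upperSemicontinuousOn_energy (hκ : 0 ≤ κ) (hB : Summable fun x => |B x|) :
    UpperSemicontinuousOn (energy κ B) unitBall := by
  have hK : LowerSemicontinuousOn dirichletEnergy unitBall :=
    lowerSemicontinuousOn_tsum_of_nonneg (fun x => by fun_prop) (fun x v => sq_nonneg _)
      fun v hv => summable_sq_succ_sub hv.1
  have hKneg : UpperSemicontinuousOn (fun v => -(2 * κ) * dirichletEnergy v) unitBall :=
    (continuous_const_mul (-(2 * κ))).comp_lowerSemicontinuousOn_antitone hK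
      fun a b hab => by nlinarith
  have hsplit : energy κ B = fun v => ∑' x, B x * v x ^ 2 + -(2 * κ) * dirichletEnergy v :=
    funext fun v => by rw [energy]; ring
  exact hsplit ▸ (continuousOn_tsum_mul_sq hB).upperSemicontinuousOn.add hKneg

theorem exists_isMaxOn_energy (hκ : 0 ≤ κ) (hB : Summable fun x => |B x|) :
    ∃ ψ ∈ unitBall, IsMaxOn (energy κ B) unitBall ψ :=
  (upperSemicontinuousOn_energy hκ hB).exists_isMaxOn ⟨0, zero_mem_unitBall⟩ isCompact_unitBall

theorem energy_zero : energy κ B 0 = 0 := by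
  simp [energy, dirichletEnergy]

theorem energy_smul (c : ℝ) (v : ℤ → ℝ) : energy κ B (c • v) = c ^ 2 * energy κ B v := by
  have hpot : ∀ x, B x * (c * v x) ^ 2 = c ^ 2 * (B x * v x ^ 2) := fun x => by ring
  have hkin : ∀ x, (c * v (x + 1) - c * v x) ^ 2 = c ^ 2 * (v (x + 1) - v x) ^ 2 := fun x => by ring
  simp only [energy, dirichletEnergy, Pi.smul_apply, smul_eq_mul, hpot, hkin, tsum_mul_left]
  ring

theorem energy_le_of_isMaxOn {ψ v : ℤ → ℝ} (hψ : IsMaxOn (energy κ B) unitBall ψ)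
    (hv : Summable fun x => v x ^ 2) : energy κ B v ≤ energy κ B ψ * ∑' x, v x ^ 2 := by
  set T := ∑' x, v x ^ 2
  rcases (tsum_nonneg fun x => sq_nonneg (v x) : 0 ≤ T).eq_or_lt with hT | hT
  · have hv0 : v = 0 := funext fun x => by
      have := congrFun ((hasSum_zero_iff_of_nonneg fun x => sq_nonneg (v x)).1 (hT ▸ hv.hasSum)) x
      simpa using this
    rw [hv0, energy_zero, show T = 0 from hT.symm, mul_zero]
  · have hsq : ∀ x, ((√T)⁻¹ • v) x ^ 2 = T⁻¹ * v x ^ 2 := fun x => by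
      rw [Pi.smul_apply, smul_eq_mul, mul_pow, inv_pow, Real.sq_sqrt hT.le]
    have hmem : (√T)⁻¹ • v ∈ unitBall := by
      refine ⟨?_, ?_⟩ <;> simp only [hsq]
      · exact hv.mul_left _
      · rw [tsum_mul_left, inv_mul_cancel₀ hT.ne']
    have := isMaxOn_iff.1 hψ _ hmem
    rwa [energy_smul, inv_pow, Real.sq_sqrt hT.le, inv_mul_le_iff₀ hT, mul_comm] at this

def trapezoid (n : ℕ) (x : ℤ) : ℝ := max 0 (min 1 (2 - |(x : ℝ)| / n))

theorem trapezoid_nonneg (n : ℕ) (x : ℤ) : 0 ≤ trapezoid n x := le_max_left _ _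

theorem trapezoid_le_one (n : ℕ) (x : ℤ) : trapezoid n x ≤ 1 :=
  max_le zero_le_one (min_le_left _ _)

theorem trapezoid_eq_one {n : ℕ} {x : ℤ} (hn : n ≠ 0) (hx : |x| ≤ n) : trapezoid n x = 1 := by
  have hx' : |(x : ℝ)| ≤ n := by exact_mod_cast hx
  have : 1 ≤ 2 - |(x : ℝ)| / n := by
    rw [le_sub_comm, div_le_iff₀ (by positivity)]
    linarith
  rw [trapezoid, min_eq_left this, max_eq_right zero_le_one]

theorem trapezoid_eq_zero {n : ℕ} {x : ℤ} (hn : n ≠ 0) (hx : 2 * n ≤ |x|) : trapezoid n x = 0 := by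
  have hx' : 2 * n ≤ |(x : ℝ)| := by exact_mod_cast hx
  have : 2 - |(x : ℝ)| / n ≤ 0 := by
    rw [sub_nonpos, le_div_iff₀ (by positivity)]
    linarith
  rw [trapezoid, min_eq_right (this.trans zero_le_one), max_eq_left this]

theorem trapezoid_eq_zero_of_notMem {n : ℕ} {x : ℤ} (hn : n ≠ 0)
    (hx : x ∉ Finset.Icc (-(2 * n : ℤ)) (2 * n)) : trapezoid n x = 0 := by
  rw [Finset.mem_Icc, not_and_or, not_le, not_le] at hx
  exact trapezoid_eq_zero hn (le_abs.2 (by omega))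

theorem abs_trapezoid_succ_sub_le (n : ℕ) (x : ℤ) :
    |trapezoid n (x + 1) - trapezoid n x| ≤ 1 / n := by
  have hclamp : ∀ a b : ℝ, |max 0 (min 1 a) - max 0 (min 1 b)| ≤ |a - b| := fun a b => by
    rw [max_comm 0, max_comm 0]
    refine (abs_max_sub_max_le_abs _ _ _).trans ?_
    simpa using abs_min_sub_min_le_max 1 a 1 b
  refine (hclamp _ _).trans ?_
  rw [show 2 - |((x + 1 : ℤ) : ℝ)| / n - (2 - |(x : ℝ)| / n) = (|(x : ℝ)| - |(x : ℝ) + 1|) / n by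
    push_cast; ring, abs_div, Nat.abs_cast]
  gcongr
  simpa using abs_abs_sub_abs_le_abs_sub (x : ℝ) (x + 1)

theorem summable_trapezoid_sq {n : ℕ} (hn : n ≠ 0) : Summable fun x => trapezoid n x ^ 2 :=
  summable_of_ne_finset_zero fun x hx => by rw [trapezoid_eq_zero_of_notMem hn hx, sq, mul_zero]

theorem dirichletEnergy_trapezoid_le {n : ℕ} (hn : n ≠ 0) :
    dirichletEnergy (trapezoid n) ≤ 5 / n := by
  have hsupp : ∀ x ∉ Finset.Icc (-(2 * n : ℤ)) (2 * n),
      (trapezoid n (x + 1) - trapezoid n x) ^ 2 = 0 := by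
    intro x hx
    rw [Finset.mem_Icc, not_and_or, not_le, not_le] at hx
    rw [trapezoid_eq_zero hn (le_abs.2 (by omega)), trapezoid_eq_zero hn (le_abs.2 (by omega))]
    ring
  have hcard : ((Finset.Icc (-(2 * n : ℤ)) (2 * n)).card : ℝ) = 4 * n + 1 := by
    rw [Int.card_Icc, show (2 * (n : ℤ) + 1 - -(2 * n)).toNat = 4 * n + 1 by omega]
    push_cast; ring
  have hn1 : (1 : ℝ) ≤ n := by exact_mod_cast Nat.one_le_iff_ne_zero.2 hn
  rw [dirichletEnergy, tsum_eq_sum hsupp]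
  calc ∑ x ∈ Finset.Icc (-(2 * n : ℤ)) (2 * n), (trapezoid n (x + 1) - trapezoid n x) ^ 2
      ≤ ∑ x ∈ Finset.Icc (-(2 * n : ℤ)) (2 * n), (1 / n : ℝ) ^ 2 :=
        Finset.sum_le_sum fun x _ => by
          rw [← sq_abs]; exact pow_le_pow_left₀ (abs_nonneg _) (abs_trapezoid_succ_sub_le n x) 2
    _ = (4 * n + 1) / n ^ 2 := by rw [Finset.sum_const, nsmul_eq_mul, hcard]; ring
    _ ≤ 5 / n := by
        rw [div_le_div_iff₀ (by positivity) (by positivity)]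
        nlinarith

theorem tendsto_dirichletEnergy_trapezoid :
    Tendsto (fun n => dirichletEnergy (trapezoid n)) atTop (𝓝 0) :=
  squeeze_zero' (Eventually.of_forall fun _ => tsum_nonneg fun _ => sq_nonneg _)
    ((eventually_ne_atTop 0).mono fun _ hn => dirichletEnergy_trapezoid_le hn)
    (tendsto_const_div_atTop_nhds_zero_nat 5)

theorem tendsto_tsum_mul_trapezoid_sq (hB : Summable fun x => |B x|) :
    Tendsto (fun n => ∑' x, B x * trapezoid n x ^ 2) atTop (𝓝 (∑' x, B x)) := by
  refine tendsto_tsum_of_dominated_convergence hB (fun x => ?_) (Eventually.of_forall fun n x => ?_)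
  · refine tendsto_const_nhds.congr' ((eventually_ge_atTop (max 1 x.natAbs)).mono fun n hn => ?_)
    have hx : |x| ≤ n := by rw [Int.abs_eq_natAbs]; exact_mod_cast le_of_max_le_right hn
    simp only [trapezoid_eq_one (by omega) hx, one_pow, mul_one]
  · rw [Real.norm_eq_abs, abs_mul, abs_sq]
    exact mul_le_of_le_one_right (abs_nonneg _)
      (pow_le_one₀ (trapezoid_nonneg n x) (trapezoid_le_one n x))

theorem exists_energy_pos (κ : ℝ) (hB : Summable fun x => |B x|) (hδ : 0 < ∑' x, B x) :
    ∃ g : ℤ → ℝ, Summable (fun x => g x ^ 2) ∧ 0 < energy κ B g := by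
  have h : Tendsto (fun n => energy κ B (trapezoid n)) atTop (𝓝 (∑' x, B x)) := by
    simpa only [energy, mul_zero, sub_zero] using (tendsto_tsum_mul_trapezoid_sq hB).sub
      (tendsto_dirichletEnergy_trapezoid.const_mul (2 * κ))
  obtain ⟨n, hn, hpos⟩ := ((eventually_ne_atTop 0).and (h.eventually (lt_mem_nhds hδ))).exists
  exact ⟨trapezoid n, summable_trapezoid_sq hn, hpos⟩

theorem hasSum_mul_sq_add_single {w ψ : ℤ → ℝ} (hψ : Summable fun x => w x * ψ x ^ 2)
    (y : ℤ) (t : ℝ) :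
    HasSum (fun x => w x * (ψ + Pi.single y t : ℤ → ℝ) x ^ 2)
      (∑' x, w x * ψ x ^ 2 + w y * (2 * t * ψ y + t ^ 2)) := by
  convert hψ.hasSum_add_sum_sub (s := {y})
    (g := fun x => w x * (ψ + Pi.single y t : ℤ → ℝ) x ^ 2) fun x hx => by
      rw [Finset.mem_singleton] at hx
      simp [hx] using 2
  simp only [Pi.add_apply, Finset.sum_sub_distrib, Finset.sum_singleton, Pi.single_eq_same]
  ring

theorem hasSum_sq_succ_sub_add_single {ψ : ℤ → ℝ}
    (hψ : Summable fun x => (ψ (x + 1) - ψ x) ^ 2) (y : ℤ) (t : ℝ) :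
    HasSum (fun x => ((ψ + Pi.single y t : ℤ → ℝ) (x + 1) - (ψ + Pi.single y t : ℤ → ℝ) x) ^ 2)
      (dirichletEnergy ψ - 2 * t * discreteLaplacian ψ y + 2 * t ^ 2) := by
  convert hψ.hasSum_add_sum_sub (s := {y - 1, y})
    (g := fun x => ((ψ + Pi.single y t : ℤ → ℝ) (x + 1) - (ψ + Pi.single y t : ℤ → ℝ) x) ^ 2)
    fun x hx => by
      simp only [Finset.mem_insert, Finset.mem_singleton, not_or] at hx
      simp [hx.2, show x + 1 ≠ y by omega] using 1
  rw [Finset.sum_pair (by omega)]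
  simp only [dirichletEnergy, discreteLaplacian, sub_add_cancel, Pi.add_apply, Pi.single_eq_same,
    ne_eq, sub_eq_self, one_ne_zero, not_false_eq_true, Pi.single_eq_of_ne, add_zero, add_eq_left]
  ring

theorem eigen_eq_of_forall_energy_le {m : ℝ} {ψ : ℤ → ℝ} (hB : Summable fun x => |B x|)
    (hψ : Summable fun x => ψ x ^ 2)
    (hle : ∀ v : ℤ → ℝ, Summable (fun x => v x ^ 2) → energy κ B v ≤ m * ∑' x, v x ^ 2)
    (heq : energy κ B ψ = m * ∑' x, ψ x ^ 2) (y : ℤ) :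
    2 * κ * discreteLaplacian ψ y + B y * ψ y = m * ψ y := by
  have hquad : ∀ t, 2 * (2 * κ * discreteLaplacian ψ y + B y * ψ y - m * ψ y) * t
      + (B y - 4 * κ - m) * t ^ 2 ≤ 0 := by
    intro t
    have hnorm : HasSum (fun x => (ψ + Pi.single y t : ℤ → ℝ) x ^ 2)
        (∑' x, ψ x ^ 2 + (2 * t * ψ y + t ^ 2)) := by
      simpa using hasSum_mul_sq_add_single (w := 1) (by simpa using hψ) y t
    have hpot := hasSum_mul_sq_add_single (summable_mul_sq hB hψ) y t
    have hkin := hasSum_sq_succ_sub_add_single (summable_sq_succ_sub hψ) y t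
    have h := hle _ hnorm.summable
    rw [energy, dirichletEnergy, hpot.tsum_eq, hkin.tsum_eq, hnorm.tsum_eq] at h
    rw [energy] at heq
    linarith
  linarith [eq_zero_of_forall_mul_add_mul_sq_nonpos hquad]

end

end DiscreteSchrodinger

open DiscreteSchrodinger in
/-- for `H₂ψ(x) = 2κ(ψ(x+1)+ψ(x−1)−2ψ(x)) + B(x)ψ(x)` on `l²(ℤ)`
with `κ > 0`, `B ∈ l¹(ℤ)` and `δ = Σ_x B(x) > 0`, the supremum of the quadratic
form is strictly positive; equivalently `H₂` has a positive eigenvalue. -/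
theorem stmt16 (κ : ℝ) (hκ : 0 < κ)
    (B : ℤ → ℝ) (hB : Summable fun x => |B x|) (hδ : 0 < ∑' x : ℤ, B x) :
    (∃ ψ : ℤ → ℝ, ψ ≠ 0 ∧ Memℓp ψ 2 ∧
      0 < ∑' x : ℤ, (2 * κ * (ψ (x + 1) + ψ (x - 1) - 2 * ψ x) + B x * ψ x) * ψ x) ∧
    (∃ lam : ℝ, 0 < lam ∧ ∃ ψ : ℤ → ℝ, ψ ≠ 0 ∧ Memℓp ψ 2 ∧
      ∀ x : ℤ, 2 * κ * (ψ (x + 1) + ψ (x - 1) - 2 * ψ x) + B x * ψ x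
        = lam * ψ x) := by
  obtain ⟨ψ, hψ, hmax⟩ := exists_isMaxOn_energy hκ.le hB
  set m := energy κ B ψ
  have hle := fun v => energy_le_of_isMaxOn (v := v) hmax
  obtain ⟨g, hg, hEg⟩ := exists_energy_pos κ hB hδ
  have hm : 0 < m :=
    pos_of_mul_pos_left (hEg.trans_le (hle g hg)) (tsum_nonneg fun _ => sq_nonneg _)
  have hnorm : ∑' x, ψ x ^ 2 = 1 :=
    le_antisymm hψ.2 ((le_mul_iff_one_le_right hm).1 (by simpa using hle ψ hψ.1))
  have heig : ∀ x, 2 * κ * discreteLaplacian ψ x + B x * ψ x = m * ψ x :=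
    eigen_eq_of_forall_energy_le hB hψ.1 hle (by rw [hnorm, mul_one])
  have hψ0 : ψ ≠ 0 := by
    rintro rfl
    simp at hnorm
  have hmem : Memℓp ψ 2 := (memℓp_gen_iff (by norm_num)).2 (by simpa using hψ.1)
  refine ⟨⟨ψ, hψ0, hmem, ?_⟩, m, hm, ψ, hψ0, hmem, heig⟩
  have hform : ∀ x, (2 * κ * discreteLaplacian ψ x + B x * ψ x) * ψ x = m * ψ x ^ 2 :=
    fun x => by rw [heig x]; ring
  calc 0 < m * ∑' x, ψ x ^ 2 := by rw [hnorm, mul_one]; exact hm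
    _ = _ := by rw [← tsum_mul_left]; exact tsum_congr fun x => (hform x).symm
end
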